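/- Let Ω ⊆ ℝ^{n+1} be a nonempty proper open convex cone, let F be a canonical potential of Ω, and define u : Ω → ℝ by u(x) = −((n+1)/2)·e^{−2F(x)/(n+1)}. Then: (a) u(e^t x) = e^{2t}u(x) for all x ∈ Ω and t ∈ ℝ; (b) det D²u(x) = −1 for every x ∈ Ω; and (c) for every x ∈ Ω the symmetric matrix D²u(x) is nondegenerate with exactly one negative eigenvalue and n positive eigenvalues (counted with multiplicity), i.e. the Hessian metric D²u has Lorentzian signature (n,1). -/

import Mathlib

open scoped RealInnerProductSpace

noncomputable section

abbrev Euc (m : ℕ) : Type := EuclideanSpace ℝ (Fin m)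

/-- The Hessian matrix of `F` at `x` in the standard coordinates. -/
def hessMatrix {m : ℕ} (F : Euc m → ℝ) (x : Euc m) : Matrix (Fin m) (Fin m) ℝ :=
  fun i j => iteratedFDeriv ℝ 2 F x ![EuclideanSpace.single i 1, EuclideanSpace.single j 1]

/-- A nonempty proper open convex cone in `ℝ^m`. -/
def IsOpenProperConvexCone {m : ℕ} (Ω : Set (Euc m)) : Prop :=
  Ω.Nonempty ∧ IsOpen Ω ∧ Convex ℝ Ω ∧
    (∀ x ∈ Ω, ∀ t : ℝ, Real.exp t • x ∈ Ω) ∧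
    ¬ ∃ p v : Euc m, v ≠ 0 ∧ ∀ t : ℝ, p + t • v ∈ closure Ω

/-- `F` tends to `+∞` along every sequence in `Ω` converging to a boundary point of `Ω`. -/
def BlowsUpOnBoundary {m : ℕ} (Ω : Set (Euc m)) (F : Euc m → ℝ) : Prop :=
  ∀ z ∈ frontier Ω, ∀ x : ℕ → Euc m, (∀ k, x k ∈ Ω) →
    Filter.Tendsto x Filter.atTop (nhds z) →
    Filter.Tendsto (fun k => F (x k)) Filter.atTop Filter.atTop

/-- The canonical potential of a proper open convex cone `Ω ⊆ ℝ^{n+1}`. -/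
def IsCanonicalPotential (n : ℕ) (Ω : Set (Euc (n+1))) (F : Euc (n+1) → ℝ) : Prop :=
  ContDiffOn ℝ (⊤ : ℕ∞) F Ω ∧
  (∀ x ∈ Ω, (hessMatrix F x).PosDef) ∧
  (∀ x ∈ Ω, (hessMatrix F x).det = Real.exp (2 * F x)) ∧
  (∀ x ∈ Ω, ∀ t : ℝ, F (Real.exp t • x) = F x - (n + 1) * t) ∧
  BlowsUpOnBoundary Ω F

/-- The open dual cone of `Ω`. -/
def openDualCone {m : ℕ} (Ω : Set (Euc m)) : Set (Euc m) :=
  {y | ∀ x ∈ closure Ω, x ≠ 0 → 0 < ⟪x, y⟫}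

/- ### Auxiliary lemmas -/

open Matrix

section Aux

lemma euc_sum_single {m : ℕ} (v : Euc m) :
    ∑ i, v i • (EuclideanSpace.single i 1 : Euc m) = v := by
  have := (EuclideanSpace.basisFun (Fin m) ℝ).sum_repr v
  simpa [EuclideanSpace.basisFun_apply, EuclideanSpace.basisFun_repr] using this

lemma clm_apply_sum {m : ℕ} (g : Euc m →L[ℝ] ℝ) (v : Euc m) :
    g v = ∑ i, v i * g (EuclideanSpace.single i 1) := by
  conv_lhs => rw [← euc_sum_single v]
  rw [map_sum]
  simp

lemma clm2_apply_sum {m : ℕ} (T : Euc m →L[ℝ] (Euc m →L[ℝ] ℝ)) (v w : Euc m) :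
    T v w = ∑ i, v i * T (EuclideanSpace.single i 1) w := by
  conv_lhs => rw [← euc_sum_single v]
  rw [map_sum]
  simp

lemma dot_eq_inner {m : ℕ} (v w : Euc m) : (v : Fin m → ℝ) ⬝ᵥ (w : Fin m → ℝ) = ⟪v, w⟫ := by
  simp [PiLp.inner_apply, dotProduct]
  exact Finset.sum_congr rfl fun _ _ => mul_comm _ _

/-- The gradient of `F` at `x` in standard coordinates. -/
def grad {m : ℕ} (F : Euc m → ℝ) (x : Euc m) : Fin m → ℝ :=
  fun i => fderiv ℝ F x (EuclideanSpace.single i 1)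

lemma hessMatrix_eq {m : ℕ} (F : Euc m → ℝ) (x : Euc m) (i j : Fin m) :
    hessMatrix F x i j
      = fderiv ℝ (fderiv ℝ F) x (EuclideanSpace.single i 1) (EuclideanSpace.single j 1) := by
  show iteratedFDeriv ℝ 2 F x ![_, _] = _
  rw [iteratedFDeriv_two_apply]
  simp

lemma vecMulVec_neg_neg {m : ℕ} (g : Fin m → ℝ) (c : ℝ) :
    vecMulVec (c • -g) (-g) = c • vecMulVec g g := by
  ext i j
  simp [vecMulVec_apply]
  ring

lemma det_formula {m : ℕ} (H : Matrix (Fin m) (Fin m) ℝ) (g xv : Fin m → ℝ) (c : ℝ)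
    (hHx : H *ᵥ xv = -g) :
    (H + c • vecMulVec g g).det = H.det * (1 - c * (g ⬝ᵥ xv)) := by
  have key : H + c • vecMulVec g g
      = H * (1 + replicateCol Unit (c • xv) * replicateRow Unit (H *ᵥ xv)) := by
    rw [mul_add, mul_one, ← Matrix.mul_assoc, ← replicateCol_mulVec]
    have h1 : H *ᵥ (c • xv) = c • -g := by
      rw [Matrix.mulVec_smul, hHx]
    rw [h1, hHx, ← vecMulVec_eq Unit, vecMulVec_neg_neg]
  rw [key, det_mul, det_one_add_replicateCol_mul_replicateRow]
  congr 1
  rw [hHx]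
  simp [dotProduct_smul, neg_dotProduct, smul_eq_mul]
  ring

lemma signature_lemma {m : ℕ} (M : Matrix (Fin m) (Fin m) ℝ) (hH : M.IsHermitian)
    (g : Fin m → ℝ)
    (hdet : M.det < 0)
    (hpos : ∀ v : Fin m → ℝ, v ≠ 0 → g ⬝ᵥ v = 0 → 0 < v ⬝ᵥ (M *ᵥ v)) :
    (Finset.univ.filter fun i => hH.eigenvalues i < 0).card = 1 ∧
    (Finset.univ.filter fun i => 0 < hH.eigenvalues i).card = m - 1 := by
  set lam := hH.eigenvalues with hlam
  set B := hH.eigenvectorBasis with hB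
  have hprod : M.det = ∏ i, lam i := by
    simpa using hH.det_eq_prod_eigenvalues
  have hnz : ∀ i, lam i ≠ 0 := by
    intro i hzero
    rw [hprod, Finset.prod_eq_zero (Finset.mem_univ i) hzero] at hdet
    exact lt_irrefl 0 hdet
  have hBd : ∀ i j, (⇑(B i) : Fin m → ℝ) ⬝ᵥ (⇑(B j) : Fin m → ℝ)
      = if i = j then 1 else 0 := by
    intro i j
    rw [dot_eq_inner]
    exact orthonormal_iff_ite.mp B.orthonormal i j
  have hmv : ∀ i, M *ᵥ (⇑(B i) : Fin m → ℝ) = lam i • ⇑(B i) :=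
    fun i => hH.mulVec_eigenvectorBasis i
  have key : ∀ i j, lam i < 0 → lam j < 0 → i = j := by
    intro i j hi hj
    by_contra hij
    set ui : Fin m → ℝ := ⇑(B i) with hui
    set uj : Fin m → ℝ := ⇑(B j) with huj
    have hBne : ∀ k, (⇑(B k) : Fin m → ℝ) ≠ 0 := by
      intro k hk
      apply B.orthonormal.ne_zero k
      have h1 := hBd k k
      rw [hk] at h1
      simp at h1
    by_cases h0 : g ⬝ᵥ uj = 0 ∧ g ⬝ᵥ ui = 0
    · have hQ := hpos ui (hBne i) h0.2
      rw [hmv i] at hQ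
      have : ui ⬝ᵥ (lam i • ui) = lam i := by
        rw [dotProduct_smul, smul_eq_mul]
        have := hBd i i
        simp at this
        rw [this, mul_one]
      rw [this] at hQ
      linarith
    · set α : ℝ := g ⬝ᵥ uj with hα
      set β : ℝ := -(g ⬝ᵥ ui) with hβ
      have hαβ : 0 < α ^ 2 + β ^ 2 := by
        rcases not_and_or.mp h0 with h | h
        · have : α ≠ 0 := h
          nlinarith [sq_nonneg β, sq_abs α, pow_pos (abs_pos.mpr this) 2]
        · have : β ≠ 0 := by simpa [hβ] using h
          nlinarith [sq_nonneg α, sq_abs β, pow_pos (abs_pos.mpr this) 2]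
      set v : Fin m → ℝ := α • ui + β • uj with hv
      have hvv : v ⬝ᵥ v = α ^ 2 + β ^ 2 := by
        simp only [hv, add_dotProduct, dotProduct_add, smul_dotProduct, dotProduct_smul,
          smul_eq_mul]
        rw [hBd i i, hBd i j, hBd j i, hBd j j]
        simp [hij, Ne.symm hij]
        ring
      have hvne : v ≠ 0 := by
        intro h
        rw [h] at hvv
        simp at hvv
        linarith
      have hgv : g ⬝ᵥ v = 0 := by
        simp only [hv, dotProduct_add, dotProduct_smul, smul_eq_mul, hα, hβ]
        ring
      have hMv : M *ᵥ v = α • (lam i • ui) + β • (lam j • uj) := by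
        simp only [hv, Matrix.mulVec_add, Matrix.mulVec_smul, hmv]
        rw [hui, huj, hmv i, hmv j]
      have hQval : v ⬝ᵥ (M *ᵥ v) = lam i * α ^ 2 + lam j * β ^ 2 := by
        rw [hMv]
        simp only [hv, add_dotProduct, dotProduct_add, smul_dotProduct, dotProduct_smul,
          smul_eq_mul]
        rw [hBd i i, hBd i j, hBd j i, hBd j j]
        simp [hij, Ne.symm hij]
        ring
      have := hpos v hvne hgv
      rw [hQval] at this
      nlinarith [sq_nonneg α, sq_nonneg β]
  have hScard : (Finset.univ.filter fun i => lam i < 0).card ≤ 1 := by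
    apply Finset.card_le_one.mpr
    intro i hi j hj
    rw [Finset.mem_filter] at hi hj
    exact key i j hi.2 hj.2
  have hSne : (Finset.univ.filter fun i => lam i < 0).card ≠ 0 := by
    intro h
    rw [Finset.card_eq_zero, Finset.filter_eq_empty_iff] at h
    have hall : ∀ i, 0 < lam i := by
      intro i
      rcases (hnz i).lt_or_gt with h' | h'
      · exact absurd h' (h (Finset.mem_univ i))
      · exact h'
    have : 0 < ∏ i, lam i := Finset.prod_pos fun i _ => hall i
    rw [← hprod] at this
    linarith
  have hS1 : (Finset.univ.filter fun i => lam i < 0).card = 1 := by omega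
  refine ⟨hS1, ?_⟩
  have hcongr : (Finset.univ.filter fun i => 0 < lam i)
      = Finset.univ.filter fun i => ¬(lam i < 0) := by
    apply Finset.filter_congr
    intro i _
    constructor
    · intro h; exact not_lt_of_gt h
    · intro h; exact ((hnz i).lt_or_gt).resolve_left h
  have htot := Finset.card_filter_add_card_filter_not
    (s := (Finset.univ : Finset (Fin m))) (p := fun i => lam i < 0)
  rw [hcongr]
  simp only [Finset.card_univ, Fintype.card_fin] at htot
  omega

end Aux

section CalcAux

variable {n : ℕ} {Ω : Set (Euc (n+1))} {F u : Euc (n+1) → ℝ}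
variable (hopen : IsOpen Ω) (hcone : ∀ x ∈ Ω, ∀ t : ℝ, Real.exp t • x ∈ Ω)
variable (hsm : ContDiffOn ℝ (⊤ : ℕ∞) F Ω)
variable (hhom : ∀ x ∈ Ω, ∀ t : ℝ, F (Real.exp t • x) = F x - (n + 1) * t)
variable (hu : u = fun x => -((n + 1 : ℝ) / 2) * Real.exp (-2 * F x / (n + 1)))

include hopen hsm in
lemma hdF : ∀ y ∈ Ω, DifferentiableAt ℝ F y := fun y hy =>
  ((hsm.contDiffAt (hopen.mem_nhds hy)).differentiableAt (by simp))

include hopen hsm in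
lemma hdG : ∀ y ∈ Ω, DifferentiableAt ℝ (fderiv ℝ F) y := fun y hy => by
  have h := (hsm.contDiffAt (hopen.mem_nhds hy)).fderiv_right (m := 1) (by exact WithTop.coe_le_coe.mpr le_top)
  exact h.differentiableAt one_ne_zero

lemma curve_deriv (x : Euc (n+1)) :
    HasDerivAt (fun t : ℝ => Real.exp t • x) x 0 := by
  have := (Real.hasDerivAt_exp 0).smul_const x
  simpa using this

include hopen hsm hhom in
lemma L1 : ∀ x ∈ Ω, fderiv ℝ F x x = -((n : ℝ) + 1) := by
  intro x hx
  have h1 : HasDerivAt (fun t : ℝ => F (Real.exp t • x)) (fderiv ℝ F x x) 0 := by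
    have hf : HasFDerivAt F (fderiv ℝ F x) ((fun t : ℝ => Real.exp t • x) 0) := by
      simpa using (hdF hopen hsm x hx).hasFDerivAt
    simpa [Function.comp_def] using hf.comp_hasDerivAt 0 (curve_deriv x)
  have h2 : HasDerivAt (fun t : ℝ => F x - ((n : ℝ) + 1) * t) (-((n : ℝ) + 1)) 0 := by
    simpa using ((hasDerivAt_id (0:ℝ)).const_mul ((n : ℝ) + 1)).const_sub (F x)
  have heq : (fun t : ℝ => F (Real.exp t • x)) = fun t : ℝ => F x - ((n : ℝ) + 1) * t :=
    funext fun t => hhom x hx t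
  rw [heq] at h1
  exact h1.unique h2

include hopen hcone hsm hhom in
lemma L2 : ∀ x ∈ Ω, ∀ t : ℝ, fderiv ℝ F (Real.exp t • x) = Real.exp (-t) • fderiv ℝ F x := by
  intro x hx t
  set L : Euc (n+1) →L[ℝ] Euc (n+1) := Real.exp t • (ContinuousLinearMap.id ℝ (Euc (n+1)))
  have h1 : HasFDerivAt (fun y : Euc (n+1) => Real.exp t • y) L x := by
    exact ((hasFDerivAt_id x).const_smul (Real.exp t))
  have h2 : HasFDerivAt (fun y => F (Real.exp t • y))
      ((fderiv ℝ F (Real.exp t • x)).comp L) x :=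
    (hdF hopen hsm _ (hcone x hx t)).hasFDerivAt.comp x h1
  have h3 : HasFDerivAt (fun y => F y - ((n : ℝ) + 1) * t)
      ((fderiv ℝ F (Real.exp t • x)).comp L) x := by
    apply h2.congr_of_eventuallyEq
    filter_upwards [hopen.mem_nhds hx] with y hy
    exact (hhom y hy t).symm
  have h4 : HasFDerivAt (fun y => F y - ((n : ℝ) + 1) * t) (fderiv ℝ F x) x :=
    (hdF hopen hsm x hx).hasFDerivAt.sub_const _
  have h5 := h3.unique h4
  ext v
  have := congrArg (fun (T : Euc (n+1) →L[ℝ] ℝ) => T v) h5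
  simp only [ContinuousLinearMap.comp_apply, L, ContinuousLinearMap.smul_apply,
    ContinuousLinearMap.id_apply] at this ⊢
  rw [ContinuousLinearMap.map_smul] at this
  rw [← this, smul_smul, ← Real.exp_add, neg_add_cancel, Real.exp_zero, one_smul]

include hopen hcone hsm hhom in
lemma L3 : ∀ x ∈ Ω, fderiv ℝ (fderiv ℝ F) x x = -fderiv ℝ F x := by
  intro x hx
  have h1 : HasDerivAt (fun t : ℝ => fderiv ℝ F (Real.exp t • x))
      (fderiv ℝ (fderiv ℝ F) x x) 0 := by
    have hf : HasFDerivAt (fderiv ℝ F) (fderiv ℝ (fderiv ℝ F) x)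
        ((fun t : ℝ => Real.exp t • x) 0) := by
      simpa using (hdG hopen hsm x hx).hasFDerivAt
    simpa [Function.comp_def] using hf.comp_hasDerivAt 0 (curve_deriv x)
  have h2 : HasDerivAt (fun t : ℝ => Real.exp (-t) • fderiv ℝ F x)
      (-fderiv ℝ F x) 0 := by
    have he : HasDerivAt (fun t : ℝ => Real.exp (-t)) (-1 : ℝ) 0 := by
      have := (Real.hasDerivAt_exp (-(0:ℝ))).comp 0 (hasDerivAt_neg (0:ℝ))
      simpa [Function.comp_def] using this
    simpa using he.smul_const (fderiv ℝ F x)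
  have heq : (fun t : ℝ => fderiv ℝ F (Real.exp t • x))
      = fun t : ℝ => Real.exp (-t) • fderiv ℝ F x :=
    funext fun t => L2 hopen hcone hsm hhom x hx t
  rw [heq] at h1
  exact h1.unique h2

include hopen hsm hu in
lemma L4 : ∀ x ∈ Ω,
    hessMatrix u x = Real.exp (-2 / ((n : ℝ) + 1) * F x) •
      (hessMatrix F x + (-2 / ((n : ℝ) + 1)) • vecMulVec (grad F x) (grad F x)) := by
  intro x hx
  set c : ℝ := -2 / ((n : ℝ) + 1) with hc
  have hn1 : ((n : ℝ) + 1) ≠ 0 := by positivity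
  have hKc : -(((n : ℝ) + 1) / 2) * c = 1 := by rw [hc]; field_simp
  have hu' : u = fun y => -(((n : ℝ) + 1) / 2) * Real.exp (c * F y) := by
    rw [hu, hc]; funext y; ring_nf
  have hE : ∀ y ∈ Ω, HasFDerivAt (fun z => Real.exp (c * F z))
      ((Real.exp (c * F y) * c) • fderiv ℝ F y) y := by
    intro y hy
    have h0 : HasFDerivAt (fun z => c * F z) (c • fderiv ℝ F y) y :=
      (hdF hopen hsm y hy).hasFDerivAt.const_mul c
    have h1 := h0.exp
    rwa [smul_smul] at h1
  have hDu : ∀ y ∈ Ω, HasFDerivAt u (Real.exp (c * F y) • fderiv ℝ F y) y := by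
    intro y hy
    have h2 := (hE y hy).const_mul (-(((n : ℝ) + 1) / 2))
    rw [hu']
    refine h2.congr_fderiv (Eq.symm ?_)
    rw [smul_smul]
    congr 1
    calc Real.exp (c * F y) = 1 * Real.exp (c * F y) := (one_mul _).symm
      _ = -(((n : ℝ) + 1) / 2) * c * Real.exp (c * F y) := by rw [hKc]
      _ = -(((n : ℝ) + 1) / 2) * (Real.exp (c * F y) * c) := by ring
  have hev : fderiv ℝ u =ᶠ[nhds x] fun y => Real.exp (c * F y) • fderiv ℝ F y := by
    filter_upwards [hopen.mem_nhds hx] with y hy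
    exact (hDu y hy).fderiv
  have hsmul : HasFDerivAt (fun y => Real.exp (c * F y) • fderiv ℝ F y)
      (Real.exp (c * F x) • fderiv ℝ (fderiv ℝ F) x
        + ((Real.exp (c * F x) * c) • fderiv ℝ F x).smulRight (fderiv ℝ F x)) x :=
    (hE x hx).smul (hdG hopen hsm x hx).hasFDerivAt
  have h2nd : fderiv ℝ (fderiv ℝ u) x
      = Real.exp (c * F x) • fderiv ℝ (fderiv ℝ F) x
        + ((Real.exp (c * F x) * c) • fderiv ℝ F x).smulRight (fderiv ℝ F x) := by
    rw [hev.fderiv_eq]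
    exact hsmul.fderiv
  ext i j
  rw [hessMatrix_eq, h2nd]
  simp only [Matrix.smul_apply, Matrix.add_apply, vecMulVec_apply, hessMatrix_eq F,
    ContinuousLinearMap.add_apply, ContinuousLinearMap.smul_apply,
    ContinuousLinearMap.smulRight_apply, grad, smul_eq_mul, mul_comm, mul_assoc, mul_left_comm]
  ring

include hopen hsm hhom in
lemma L7 : ∀ x ∈ Ω, grad F x ⬝ᵥ (fun i => x i) = -((n : ℝ) + 1) := by
  intro x hx
  have h : grad F x ⬝ᵥ (fun i => x i) = fderiv ℝ F x x := by
    rw [clm_apply_sum (fderiv ℝ F x) x]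
    simp [dotProduct, grad, mul_comm]
  rw [h, L1 hopen hsm hhom x hx]

include hopen hcone hsm hhom in
lemma L6 : ∀ x ∈ Ω, (hessMatrix F x).IsHermitian →
    hessMatrix F x *ᵥ (fun i => x i) = -(grad F x) := by
  intro x hx hsym
  have hsym' : ∀ a b, hessMatrix F x a b = hessMatrix F x b a := by
    intro a b
    have := congrFun (congrFun hsym b) a
    simpa [Matrix.conjTranspose_apply] using this
  funext i
  have h1 : fderiv ℝ (fderiv ℝ F) x x (EuclideanSpace.single i 1)
      = ∑ j, x j * hessMatrix F x j i := by
    rw [clm2_apply_sum (fderiv ℝ (fderiv ℝ F) x) x (EuclideanSpace.single i 1)]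
    refine Finset.sum_congr rfl fun j _ => ?_
    rw [hessMatrix_eq]
  have h2 : fderiv ℝ (fderiv ℝ F) x x (EuclideanSpace.single i 1) = -(grad F x i) := by
    rw [L3 hopen hcone hsm hhom x hx]
    rfl
  show ∑ j, hessMatrix F x i j * x j = -(grad F x) i
  calc ∑ j, hessMatrix F x i j * x j = ∑ j, x j * hessMatrix F x j i := by
        refine Finset.sum_congr rfl fun j _ => ?_
        rw [hsym' j i]; ring
    _ = -(grad F x i) := by rw [← h1, h2]
    _ = -(grad F x) i := by simp

end CalcAux

/-- The function `u = -((n+1)/2) e^{-2F/(n+1)}` is positively homogeneous of degree 2,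
satisfies `det D²u = -1`, and its Hessian has Lorentzian signature `(n,1)`. -/
theorem lorentzian_monge_ampere_potential
    (n : ℕ) (Ω : Set (Euc (n + 1))) (hΩ : IsOpenProperConvexCone Ω)
    (F : Euc (n + 1) → ℝ) (hF : IsCanonicalPotential n Ω F)
    (u : Euc (n + 1) → ℝ)
    (hu : u = fun x => -((n + 1 : ℝ) / 2) * Real.exp (-2 * F x / (n + 1))) :
    (∀ x ∈ Ω, ∀ t : ℝ, u (Real.exp t • x) = Real.exp (2 * t) * u x) ∧
    (∀ x ∈ Ω, (hessMatrix u x).det = -1) ∧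
    (∀ x ∈ Ω, ∃ hH : (hessMatrix u x).IsHermitian,
      (Finset.univ.filter fun i => hH.eigenvalues i < 0).card = 1 ∧
      (Finset.univ.filter fun i => 0 < hH.eigenvalues i).card = n) := by
  obtain ⟨hne, hopen, hconv, hcone, hproper⟩ := hΩ
  obtain ⟨hsm, hpd, hdetF, hhom, hblow⟩ := hF
  have hn1 : ((n : ℝ) + 1) ≠ 0 := by positivity
  set c : ℝ := -2 / ((n : ℝ) + 1) with hc
  -- part (a)
  have parta : ∀ x ∈ Ω, ∀ t : ℝ, u (Real.exp t • x) = Real.exp (2 * t) * u x := by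
    intro x hx t
    rw [hu]
    simp only
    rw [hhom x hx t]
    have harg : -2 * (F x - ((n : ℝ) + 1) * t) / ((n : ℝ) + 1)
        = 2 * t + -2 * F x / ((n : ℝ) + 1) := by
      field_simp
      ring_nf
      try linarith
    rw [harg, Real.exp_add]
    ring
  -- the Hessian identities at a point
  have hHx : ∀ x ∈ Ω, hessMatrix F x *ᵥ (fun i => x i) = -(grad F x) :=
    fun x hx => L6 hopen hcone hsm hhom x hx (hpd x hx).1
  have hgx : ∀ x ∈ Ω, grad F x ⬝ᵥ (fun i => x i) = -((n : ℝ) + 1) :=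
    L7 hopen hsm hhom
  have hL4 := L4 hopen hsm hu
  -- part (b)
  have partb : ∀ x ∈ Ω, (hessMatrix u x).det = -1 := by
    intro x hx
    rw [hL4 x hx, det_smul, det_formula _ _ _ _ (hHx x hx), hdetF x hx, hgx x hx]
    rw [Fintype.card_fin]
    have h1 : (1 : ℝ) - (-2 / ((n : ℝ) + 1)) * -((n : ℝ) + 1) = -1 := by
      field_simp
      ring
    rw [h1]
    have h2 : Real.exp (-2 / ((n : ℝ) + 1) * F x) ^ (n + 1)
        = Real.exp (-(2 * F x)) := by
      rw [← Real.exp_nat_mul]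
      congr 1
      field_simp
      push_cast
      ring
    rw [h2, ← mul_assoc, ← Real.exp_add]
    simp
  refine ⟨parta, partb, ?_⟩
  -- part (c)
  intro x hx
  have hsymH : ∀ a b, hessMatrix F x a b = hessMatrix F x b a := by
    intro a b
    have := congrFun (congrFun (hpd x hx).1 b) a
    simpa [Matrix.conjTranspose_apply] using this
  have hHerm : (hessMatrix u x).IsHermitian := by
    rw [hL4 x hx]
    ext i j
    simp only [Matrix.conjTranspose_apply, Matrix.smul_apply, Matrix.add_apply,
      vecMulVec_apply, smul_eq_mul, star_trivial]
    rw [hsymH j i]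
    ring
  refine ⟨hHerm, ?_⟩
  have hdetu : (hessMatrix u x).det < 0 := by
    rw [partb x hx]; norm_num
  have hposdef := (hpd x hx).2
  have hpos : ∀ v : Fin (n+1) → ℝ, v ≠ 0 → grad F x ⬝ᵥ v = 0 →
      0 < v ⬝ᵥ (hessMatrix u x *ᵥ v) := by
    intro v hv hgv
    rw [hL4 x hx]
    have hvm : vecMulVec (grad F x) (grad F x) *ᵥ v = 0 := by
      funext i
      show ∑ j, (grad F x i * grad F x j) * v j = 0
      have : ∑ j, (grad F x i * grad F x j) * v j
          = grad F x i * (grad F x ⬝ᵥ v) := by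
        simp only [dotProduct, Finset.mul_sum]
        refine Finset.sum_congr rfl fun j _ => ?_
        ring
      rw [this, hgv, mul_zero]
    rw [smul_mulVec, Matrix.add_mulVec, smul_mulVec, hvm, smul_zero, add_zero,
      dotProduct_smul]
    have hpd' := (hpd x hx).dotProduct_mulVec_pos hv
    have hstar : star v = v := by simp
    rw [hstar] at hpd'
    have hE : 0 < Real.exp (-2 / ((n : ℝ) + 1) * F x) := Real.exp_pos _
    have : (0:ℝ) < v ⬝ᵥ (hessMatrix F x *ᵥ v) := by
      simpa using hpd'
    simpa [smul_eq_mul] using mul_pos hE this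
  have := signature_lemma (hessMatrix u x) hHerm (grad F x) hdetu hpos
  simpa using this
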